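/- arXiv:2603.13854 — 4 statements merged into one kernel-verified Lean document; each statement's English description precedes it below -/
import Mathlib

section
/- For all finsets S and V of ι, if S ∩ V ≠ ∅ then m_S * F_V = m_S in the ring R (collapse lemma: a monomial absorbs a power-set sum whose variable set meets the monomial's support). -/
/-!
Evaluate at an assignment `a` and pick `j ∈ S ∩ V`. If `a j = 0` the monomial vanishes.
If `a j = 1`, expanding `∏ i ∈ V, (1 + a i)` gives `1 + F V a`, while the factor `1 + a j = 0`
kills the product, so `F V a = 1` in characteristic two.
-/

variable {ι : Type*} [DecidableEq ι]

/-- Monomial semantics: `m S` evaluates an assignment `a` to `∏ i ∈ S, a i`. -/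
def m (S : Finset ι) : (ι → ZMod 2) → ZMod 2 :=
  fun a => ∏ i ∈ S, a i

/-- Power-set sum semantics: `F U` evaluates `a` to the sum over nonempty subsets `A ⊆ U`
of `∏ i ∈ A, a i`. -/
def F (U : Finset ι) : (ι → ZMod 2) → ZMod 2 :=
  fun a => ∑ A ∈ U.powerset.erase ∅, ∏ i ∈ A, a i

theorem Finset.sum_powerset_erase_empty_prod {R : Type*} [CommRing R] (U : Finset ι)
    (f : ι → R) :
    ∑ A ∈ U.powerset.erase ∅, ∏ i ∈ A, f i = ∏ i ∈ U, (1 + f i) - 1 := by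
  rw [Finset.prod_one_add, ← Finset.add_sum_erase _ _ (Finset.empty_mem_powerset U),
    Finset.prod_empty, add_sub_cancel_left]

theorem F_apply_eq_one_of_mem {U : Finset ι} {a : ι → ZMod 2} {j : ι} (hj : j ∈ U)
    (haj : a j = 1) : F U a = 1 := by
  have hprod : ∏ i ∈ U, (1 + a i) = 0 :=
    Finset.prod_eq_zero hj (by rw [haj]; decide)
  rw [F, Finset.sum_powerset_erase_empty_prod, hprod]
  decide

theorem ZMod.eq_zero_or_eq_one (x : ZMod 2) : x = 0 ∨ x = 1 := by
  revert x
  decide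

theorem stmt2 (S V : Finset ι) (h : S ∩ V ≠ ∅) :
    m S * F V = m S := by
  obtain ⟨j, hj⟩ := Finset.nonempty_iff_ne_empty.mpr h
  obtain ⟨hjS, hjV⟩ := Finset.mem_inter.mp hj
  funext a
  rw [Pi.mul_apply]
  rcases ZMod.eq_zero_or_eq_one (a j) with haj | haj
  · rw [show m S a = 0 from Finset.prod_eq_zero hjS haj, zero_mul]
  · rw [F_apply_eq_one_of_mem hjV haj, mul_one]
end

section
/- For all finsets S, U, T, V of ι, the product of the evaluations of two power terms satisfies (m_S * F_U) * (m_T * F_V) = m_{S ∪ T} * F_{U ∪ V} + m_{S ∪ T} * F_U + m_{S ∪ T} * F_V in R (semantic core of the Multiplication Rewriting Principle: the product of any two power term evaluations equals the evaluation of a power term polynomial with at most three atomic terms). -/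
variable {ι : Type*} [DecidableEq ι]

/-!
Over `ZMod 2` every element is idempotent, so products of the form `∏ i ∈ A, f i` multiply
by taking the union of the index sets; this gives `m S * m T = m (S ∪ T)`. Moreover
`F U a = ∏ i ∈ U, (1 + a i) - 1`, since the empty subset contributes the `1` of the expanded
product. Writing `P`, `Q` for the products over `U`, `V`, the product over `U ∪ V` is `P * Q`,
and the claim reduces to `(P - 1) (Q - 1) = (P Q - 1) + (P - 1) + (Q - 1)`, which holds
in characteristic two.
-/

theorem Finset.prod_mul_prod_eq_prod_union_of_isIdempotentElem {α M : Type*} [DecidableEq α]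
    [CommMonoid M] {f : α → M} (hf : ∀ i, IsIdempotentElem (f i)) (A B : Finset α) :
    (∏ i ∈ A, f i) * ∏ i ∈ B, f i = ∏ i ∈ A ∪ B, f i := by
  have hsub : A ∩ B ⊆ A ∪ B := Finset.inter_subset_left.trans Finset.subset_union_left
  rw [← Finset.prod_union_inter, ← Finset.prod_sdiff hsub, mul_assoc, ← Finset.prod_mul_distrib,
    Finset.prod_congr rfl fun i _ => hf i]

theorem ZMod.isIdempotentElem_two (x : ZMod 2) : IsIdempotentElem x := by
  fin_cases x <;> rfl

theorem m_mul_m (S T : Finset ι) : m S * m T = m (S ∪ T) :=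
  funext fun a =>
    Finset.prod_mul_prod_eq_prod_union_of_isIdempotentElem (fun i => (a i).isIdempotentElem_two) S T

theorem F_apply (U : Finset ι) (a : ι → ZMod 2) : F U a = ∏ i ∈ U, (1 + a i) - 1 := by
  rw [Finset.prod_one_add, ← Finset.sum_erase_add _ _ (Finset.empty_mem_powerset U),
    Finset.prod_empty, add_sub_cancel_right, F]

theorem stmt4 (S U T V : Finset ι) :
    (m S * F U) * (m T * F V)
      = m (S ∪ T) * F (U ∪ V) + m (S ∪ T) * F U + m (S ∪ T) * F V := by
  funext a
  have hm : m S a * m T a = m (S ∪ T) a := congrFun (m_mul_m S T) a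
  have hprod : (∏ i ∈ U, (1 + a i)) * ∏ i ∈ V, (1 + a i) = ∏ i ∈ U ∪ V, (1 + a i) :=
    Finset.prod_mul_prod_eq_prod_union_of_isIdempotentElem
      (fun i => (1 + a i).isIdempotentElem_two) U V
  have hchar : (2 : ZMod 2) = 0 := rfl
  simp only [Pi.mul_apply, Pi.add_apply, F_apply]
  linear_combination
    ((∏ i ∈ U, (1 + a i)) - 1) * ((∏ i ∈ V, (1 + a i)) - 1) * hm + m (S ∪ T) a * hprod
      - m (S ∪ T) a * ((∏ i ∈ U, (1 + a i)) + (∏ i ∈ V, (1 + a i)) - 2) * hchar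
end

section
/- Let S be a finset of ι and let t, v ∈ ι be distinct elements with t ∉ S and v ∉ S. Then m_S * F_{{t,v}} = m_{S ∪ {t}} + m_{S ∪ {t,v}} + m_{S ∪ {v}} in R (Case 1 of the shortening/expanding rule for power term polynomials). -/
variable {ι : Type*} [DecidableEq ι]

theorem m_union_of_disjoint {S T : Finset ι} (h : Disjoint S T) : m (S ∪ T) = m S * m T :=
  funext fun _ => Finset.prod_union h

theorem F_eq_sum_m (U : Finset ι) : F U = ∑ A ∈ U.powerset.erase ∅, m A := by
  funext a
  simp only [F, m, Finset.sum_apply]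

theorem Finset.powerset_pair_erase_empty {t v : ι} (htv : t ≠ v) :
    ({t, v} : Finset ι).powerset.erase ∅ = {{t}, {t, v}, {v}} := by
  rw [Finset.powerset_insert]
  ext A
  simp only [Finset.mem_erase, Finset.mem_union, Finset.mem_image, Finset.mem_powerset,
    Finset.subset_singleton_iff, Finset.mem_insert, Finset.mem_singleton]
  constructor
  · rintro ⟨hA, (rfl | rfl) | ⟨B, rfl | rfl, rfl⟩⟩ <;> simp_all
  · rintro (rfl | rfl | rfl)
    · exact ⟨Finset.singleton_ne_empty t, .inr ⟨∅, .inl rfl, rfl⟩⟩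
    · exact ⟨Finset.insert_ne_empty t {v}, .inr ⟨{v}, .inr rfl, rfl⟩⟩
    · exact ⟨Finset.singleton_ne_empty v, .inl (.inr rfl)⟩

theorem F_pair {t v : ι} (htv : t ≠ v) : F {t, v} = m {t} + m {t, v} + m {v} := by
  rw [F_eq_sum_m, Finset.powerset_pair_erase_empty htv, Finset.sum_insert, Finset.sum_insert,
    Finset.sum_singleton, add_assoc] <;>
    simp [Finset.ext_iff, htv, htv.symm]

theorem stmt8 (S : Finset ι) (t v : ι) (htv : t ≠ v) (htS : t ∉ S) (hvS : v ∉ S) :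
    m S * F {t, v} = m (S ∪ {t}) + m (S ∪ {t, v}) + m (S ∪ {v}) := by
  have hSt : Disjoint S {t} := Finset.disjoint_singleton_right.2 htS
  have hSv : Disjoint S {v} := Finset.disjoint_singleton_right.2 hvS
  have hStv : Disjoint S {t, v} := Finset.disjoint_insert_right.2 ⟨htS, hSv⟩
  rw [F_pair htv, m_union_of_disjoint hSt, m_union_of_disjoint hStv, m_union_of_disjoint hSv]
  ring
end

section
/- Let S, T, V be pairwise disjoint finsets of ι. Then m_S * F_{T ∪ V} = (∑ over nonempty subsets Ṽ ⊆ V of m_{S ∪ Ṽ} * F_T) + m_S * F_T + m_S * F_V in R (Case 3 of the shortening/expanding rule for power term polynomials). -/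
variable {ι : Type*} [DecidableEq ι]

/-! `F U + 1` is the product `∏ i ∈ U, (a i + 1)`, so over a disjoint union
`1 + F (T ∪ V) = (1 + F T) * (1 + F V)`, i.e. `F (T ∪ V) = F T * F V + F T + F V`.
Since `S` and `V` are disjoint, `m (S ∪ Ṽ) = m S * m Ṽ`, and summing `m Ṽ` over the nonempty
`Ṽ ⊆ V` gives `F V`; so the sum on the right is `m S * F V * F T`, which accounts for the
product term. -/

lemma F_apply_add_one (U : Finset ι) (a : ι → ZMod 2) :
    F U a + 1 = ∏ i ∈ U, (a i + 1) := by
  rw [Finset.prod_add_one, ← Finset.sum_erase_add _ _ (Finset.empty_mem_powerset U),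
    Finset.prod_empty, F]

lemma F_union {T V : Finset ι} (hTV : Disjoint T V) :
    F (T ∪ V) = F T * F V + F T + F V := by
  funext a
  have h := F_apply_add_one (T ∪ V) a
  rw [Finset.prod_union hTV, ← F_apply_add_one, ← F_apply_add_one] at h
  simp only [Pi.add_apply, Pi.mul_apply]
  linear_combination h

lemma m_union {S V : Finset ι} (hSV : Disjoint S V) : m (S ∪ V) = m S * m V :=
  funext fun _ => Finset.prod_union hSV

lemma sum_m_powerset_erase_empty (V : Finset ι) : ∑ Vt ∈ V.powerset.erase ∅, m Vt = F V :=
  funext fun _ => by simp only [Finset.sum_apply, m, F]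

lemma sum_m_union_powerset_erase_empty {S V : Finset ι} (hSV : Disjoint S V) :
    ∑ Vt ∈ V.powerset.erase ∅, m (S ∪ Vt) = m S * F V := by
  rw [← sum_m_powerset_erase_empty, Finset.mul_sum]
  refine Finset.sum_congr rfl fun Vt hVt => m_union (hSV.mono_right ?_)
  exact Finset.mem_powerset.mp (Finset.mem_of_mem_erase hVt)

theorem stmt10_general (S T V : Finset ι)
    (hSV : Disjoint S V) (hTV : Disjoint T V) :
    m S * F (T ∪ V)
      = (∑ Vt ∈ V.powerset.erase ∅, m (S ∪ Vt) * F T) + m S * F T + m S * F V := by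
  rw [← Finset.sum_mul, sum_m_union_powerset_erase_empty hSV, F_union hTV]
  ring

theorem stmt10 (S T V : Finset ι)
    (hST : Disjoint S T) (hSV : Disjoint S V) (hTV : Disjoint T V) :
    m S * F (T ∪ V)
      = (∑ Vt ∈ V.powerset.erase ∅, m (S ∪ Vt) * F T) + m S * F T + m S * F V :=
  stmt10_general S T V hSV hTV
end
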